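/- Let F be a field of characteristic 0 (or characteristic > some bound) and A, B, C, D ∈ F. Suppose f₁(X) = X⁴ - AX³ - (D+4)X² + (4A + BC)X + (4D + B² + C²) equals (X² + aX + b)² for some a, b in an algebraic closure of F. Then either (A = 0 and (B = 0 or C = 0) and 4D = ±8C + 16 or 4D = ±8B + 16 respectively), or A = ±B, or A = ±C, and in each case the parameter quadruple (A,B,C,D) is degenerate: it is equivalent (under permuting A,B,C and negating an even number of them) to a quadruple (A',B',C',D') with A' = B' and 4D' + A'² = 8C' + 16. -/

import Mathlib

/-- A quadruple `(A,B,C,D)` is *degenerate* if it can be obtained from a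
quadruple `(A',B',C',D')` with `A' = B'` and `4D' + A'² = 8C' + 16` by
permuting the first three coordinates and negating an even number of them. -/
def IsDegenerate {F : Type*} [Field F] (A B C D : F) : Prop :=
  ∃ (A' B' C' D' : F) (σ : Equiv.Perm (Fin 3)) (ε : Fin 3 → F),
    (∀ i, ε i = 1 ∨ ε i = -1) ∧ ε 0 * ε 1 * ε 2 = 1 ∧
    (∀ i, ![A', B', C'] i = ε i * ![A, B, C] (σ i)) ∧ D' = D ∧
    A' = B' ∧ 4 * D' + A' ^ 2 = 8 * C' + 16

lemma degen_id {F : Type*} [Field F] (A B C D : F) (hAB : A = B)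
    (h : 4 * D + A ^ 2 = 8 * C + 16) : IsDegenerate A B C D := by
  refine ⟨A, B, C, D, 1, ![1,1,1], ?_, by norm_num [Matrix.cons_val_two], ?_, rfl, hAB, h⟩
  · intro i; fin_cases i <;> norm_num
  · intro i; fin_cases i <;> simp

lemma degen_neg {F : Type*} [Field F] (A B C D : F) (hAB : A = -B)
    (h : 4 * D + A ^ 2 = -(8 * C) + 16) : IsDegenerate A B C D := by
  refine ⟨A, -B, -C, D, 1, ![1,-1,-1], ?_, by norm_num [Matrix.cons_val_two], ?_, rfl, hAB, by linear_combination h⟩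
  · intro i; fin_cases i <;> norm_num
  · intro i; fin_cases i <;> simp

lemma degen_swap {F : Type*} [Field F] (A B C D : F) (hAC : A = C)
    (h : 4 * D + A ^ 2 = 8 * B + 16) : IsDegenerate A B C D := by
  refine ⟨A, C, B, D, Equiv.swap 1 2, ![1,1,1], ?_, by norm_num [Matrix.cons_val_two], ?_, rfl, hAC, h⟩
  · intro i; fin_cases i <;> norm_num
  · intro i; fin_cases i <;> simp [Equiv.swap_apply_def]

lemma degen_swap_neg {F : Type*} [Field F] (A B C D : F) (hAC : A = -C)
    (h : 4 * D + A ^ 2 = -(8 * B) + 16) : IsDegenerate A B C D := by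
  refine ⟨A, -C, -B, D, Equiv.swap 1 2, ![1,-1,-1], ?_, by norm_num [Matrix.cons_val_two], ?_, rfl, hAC,
    by linear_combination h⟩
  · intro i; fin_cases i <;> norm_num
  · intro i; fin_cases i <;> simp [Equiv.swap_apply_def]

/-- If `f₁(X) = X⁴ - AX³ - (D+4)X² + (4A+BC)X + (4D+B²+C²)` is the square of a
quadratic `(X² + aX + b)²` over an algebraic closure, then either
(`A = 0` with `B = 0` or `C = 0` and correspondingly `4D = ±8C + 16` or
`4D = ±8B + 16`), or `A = ±B`, or `A = ±C`; and in each case the quadruple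
`(A,B,C,D)` is degenerate. -/
theorem stmt_13 {F : Type*} [Field F] [CharZero F] (A B C D : F)
    (hsq : ∃ a b : AlgebraicClosure F, ∀ X : AlgebraicClosure F,
      X ^ 4 - (algebraMap F (AlgebraicClosure F) A) * X ^ 3
        - (algebraMap F (AlgebraicClosure F) (D + 4)) * X ^ 2
        + (algebraMap F (AlgebraicClosure F) (4 * A + B * C)) * X
        + (algebraMap F (AlgebraicClosure F) (4 * D + B ^ 2 + C ^ 2))
      = (X ^ 2 + a * X + b) ^ 2) :
    ((A = 0 ∧ ((B = 0 ∧ (4 * D = 8 * C + 16 ∨ 4 * D = -(8 * C) + 16)) ∨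
               (C = 0 ∧ (4 * D = 8 * B + 16 ∨ 4 * D = -(8 * B) + 16)))) ∨
      A = B ∨ A = -B ∨ A = C ∨ A = -C) ∧
    IsDegenerate A B C D := by
  obtain ⟨a, b, h⟩ := hsq
  have h0 := h 0
  have h1 := h 1
  have hm1 := h (-1)
  have h2 := h 2
  have hm2 := h (-2)
  simp only [map_add, map_mul, map_pow, map_ofNat] at h0 h1 hm1 h2 hm2
  -- coefficient identities
  have kA : 2 * a = -(algebraMap F (AlgebraicClosure F)) A := by linear_combination (hm2 - h2 + 2*h1 - 2*hm1) / 12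
  have kB : a ^ 2 + 2 * b = -((algebraMap F (AlgebraicClosure F)) D + 4) := by linear_combination (h1 + hm1 - h2 - hm2) / 6
  have kC : 2 * (a * b) = 4 * (algebraMap F (AlgebraicClosure F)) A + (algebraMap F (AlgebraicClosure F)) B * (algebraMap F (AlgebraicClosure F)) C := by
    linear_combination (8*hm1 - 8*h1 + h2 - hm2) / 12
  have kD : b ^ 2 = 4 * (algebraMap F (AlgebraicClosure F)) D + (algebraMap F (AlgebraicClosure F)) B ^ 2 + (algebraMap F (AlgebraicClosure F)) C ^ 2 := by linear_combination -h0
  have ha : a = -((algebraMap F (AlgebraicClosure F)) A) / 2 := by linear_combination kA / 2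
  rw [ha] at kB
  have hb : b = -((algebraMap F (AlgebraicClosure F)) D + 4) / 2 - ((algebraMap F (AlgebraicClosure F)) A) ^ 2 / 8 := by linear_combination kB / 2
  rw [ha] at kC
  rw [hb] at kC kD
  have key1K : (algebraMap F (AlgebraicClosure F)) A * (4 * (algebraMap F (AlgebraicClosure F)) D + ((algebraMap F (AlgebraicClosure F)) A) ^ 2 - 16) = 8 * ((algebraMap F (AlgebraicClosure F)) B * (algebraMap F (AlgebraicClosure F)) C) := by
    linear_combination 8 * kC
  have key2K : (4 * (algebraMap F (AlgebraicClosure F)) D + ((algebraMap F (AlgebraicClosure F)) A) ^ 2 - 16) ^ 2 = 64 * (((algebraMap F (AlgebraicClosure F)) B) ^ 2 + ((algebraMap F (AlgebraicClosure F)) C) ^ 2 - ((algebraMap F (AlgebraicClosure F)) A) ^ 2) := by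
    linear_combination 64 * kD
  have inj : Function.Injective (algebraMap F (AlgebraicClosure F)) := (algebraMap F (AlgebraicClosure F)).injective
  have key1 : A * (4 * D + A ^ 2 - 16) = 8 * (B * C) := by
    apply inj
    simp only [map_mul, map_add, map_sub, map_pow, map_ofNat]
    linear_combination key1K
  have key2 : (4 * D + A ^ 2 - 16) ^ 2 = 64 * (B ^ 2 + C ^ 2 - A ^ 2) := by
    apply inj
    simp only [map_mul, map_add, map_sub, map_pow, map_ofNat]
    linear_combination key2K
  have hprod : ((A - B) * (A + B)) * ((A - C) * (A + C)) = 0 := by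
    linear_combination (A ^ 2 * key2 - (A * (4 * D + A ^ 2 - 16) + 8 * (B * C)) * key1) / 64
  rcases mul_eq_zero.mp hprod with hBB | hCC
  · rcases mul_eq_zero.mp hBB with hAB | hAB
    · -- A = B
      have hAB : A = B := sub_eq_zero.mp hAB
      refine ⟨Or.inr (Or.inl hAB), ?_⟩
      by_cases hA : A = 0
      · have hsplit : (4 * D + A ^ 2 - 16 - 8 * C) * (4 * D + A ^ 2 - 16 + 8 * C) = 0 := by
          linear_combination key2 - 64 * (A + B) * hAB
        rcases mul_eq_zero.mp hsplit with hx | hx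
        · exact degen_id A B C D hAB (by linear_combination hx)
        · exact degen_neg A B C D (by linear_combination 2 * hA - hAB) (by linear_combination hx)
      · have hx : A * (4 * D + A ^ 2 - 16 - 8 * C) = 0 := by
          linear_combination key1 - 8 * C * hAB
        have h3 := (mul_eq_zero.mp hx).resolve_left hA
        exact degen_id A B C D hAB (by linear_combination h3)
    · -- A = -B
      have hAB : A = -B := eq_neg_of_add_eq_zero_left hAB
      refine ⟨Or.inr (Or.inr (Or.inl hAB)), ?_⟩
      by_cases hA : A = 0
      · have hsplit : (4 * D + A ^ 2 - 16 - 8 * C) * (4 * D + A ^ 2 - 16 + 8 * C) = 0 := by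
          linear_combination key2 - 64 * (A - B) * hAB
        rcases mul_eq_zero.mp hsplit with hx | hx
        · exact degen_id A B C D (by linear_combination 2 * hA - hAB) (by linear_combination hx)
        · exact degen_neg A B C D hAB (by linear_combination hx)
      · have hx : A * (4 * D + A ^ 2 - 16 + 8 * C) = 0 := by
          linear_combination key1 + 8 * C * hAB
        have h3 := (mul_eq_zero.mp hx).resolve_left hA
        exact degen_neg A B C D hAB (by linear_combination h3)
  · rcases mul_eq_zero.mp hCC with hAC | hAC
    · -- A = C
      have hAC : A = C := sub_eq_zero.mp hAC
      refine ⟨Or.inr (Or.inr (Or.inr (Or.inl hAC))), ?_⟩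
      by_cases hA : A = 0
      · have hsplit : (4 * D + A ^ 2 - 16 - 8 * B) * (4 * D + A ^ 2 - 16 + 8 * B) = 0 := by
          linear_combination key2 - 64 * (A + C) * hAC
        rcases mul_eq_zero.mp hsplit with hx | hx
        · exact degen_swap A B C D hAC (by linear_combination hx)
        · exact degen_swap_neg A B C D (by linear_combination 2 * hA - hAC) (by linear_combination hx)
      · have hx : A * (4 * D + A ^ 2 - 16 - 8 * B) = 0 := by
          linear_combination key1 - 8 * B * hAC
        have h3 := (mul_eq_zero.mp hx).resolve_left hA
        exact degen_swap A B C D hAC (by linear_combination h3)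
    · -- A = -C
      have hAC : A = -C := eq_neg_of_add_eq_zero_left hAC
      refine ⟨Or.inr (Or.inr (Or.inr (Or.inr hAC))), ?_⟩
      by_cases hA : A = 0
      · have hsplit : (4 * D + A ^ 2 - 16 - 8 * B) * (4 * D + A ^ 2 - 16 + 8 * B) = 0 := by
          linear_combination key2 - 64 * (A - C) * hAC
        rcases mul_eq_zero.mp hsplit with hx | hx
        · exact degen_swap A B C D (by linear_combination 2 * hA - hAC) (by linear_combination hx)
        · exact degen_swap_neg A B C D hAC (by linear_combination hx)
      · have hx : A * (4 * D + A ^ 2 - 16 + 8 * B) = 0 := by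
          linear_combination key1 + 8 * B * hAC
        have h3 := (mul_eq_zero.mp hx).resolve_left hA
        exact degen_swap_neg A B C D hAC (by linear_combination h3)
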